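/- arXiv:1604.05710 — 3 statements merged into one kernel-verified Lean document; each statement's English description precedes it below -/
import Mathlib

section
/- Let Q : ℝᵈ × ℝᵈ → ℝᵈ be a nonzero symmetric bilinear map such that the trilinear form (x,y,z) ↦ ⟨Q(x,y), z⟩ is symmetric under all permutations of (x,y,z). Then there exists z ∈ ℝᵈ with z ≠ 0 and Q(z,z) = z. -/
open scoped InnerProductSpace

/-!
Maximize the cubic form `f x = ⟪Q x x, x⟫` on the unit sphere. By polarization `f` is not
identically zero when `Q ≠ 0`, and it is odd, so the maximum `M` is positive and is attained at
some `u`. Homogeneity gives `f x ≤ M ‖x‖³` everywhere, and differentiating along lines through `u`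
(the derivative of `f` at `u` is `3 ⟪Q u u, ·⟫` by the symmetry of the cubic form) shows that `u`
is a Lagrange point: `Q u u = M u`. Then `z = M⁻¹ u` solves `Q z z = z`.
-/

section CubicForm

variable {E : Type*} [NormedAddCommGroup E] [InnerProductSpace ℝ E]

def cubicForm (Q : E →ₗ[ℝ] E →ₗ[ℝ] E) (x : E) : ℝ := ⟪Q x x, x⟫_ℝ

variable {Q : E →ₗ[ℝ] E →ₗ[ℝ] E}

theorem cubicForm_smul (c : ℝ) (x : E) : cubicForm Q (c • x) = c ^ 3 * cubicForm Q x := by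
  simp only [cubicForm, map_smul, LinearMap.smul_apply, inner_smul_left, inner_smul_right,
    RCLike.conj_to_real]
  ring

theorem cubicForm_neg (x : E) : cubicForm Q (-x) = -cubicForm Q x := by
  rw [← neg_one_smul ℝ x, cubicForm_smul]
  ring

theorem cubicForm_add_smul (htri : ∀ x y z, ⟪Q x y, z⟫_ℝ = ⟪Q y z, x⟫_ℝ) (x y : E) (t : ℝ) :
    cubicForm Q (x + t • y) = cubicForm Q x + 3 * t * ⟪Q x x, y⟫_ℝ
      + 3 * t ^ 2 * ⟪Q y y, x⟫_ℝ + t ^ 3 * cubicForm Q y := by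
  simp only [cubicForm, map_add, map_smul, LinearMap.add_apply, LinearMap.smul_apply,
    inner_add_left, inner_add_right, inner_smul_left, inner_smul_right, RCLike.conj_to_real]
  rw [htri y x y, htri x y y, htri x y x, htri y x x]
  ring

theorem inner_apply_self_eq_zero_of_cubicForm_eq_zero
    (htri : ∀ x y z, ⟪Q x y, z⟫_ℝ = ⟪Q y z, x⟫_ℝ) (h : ∀ x, cubicForm Q x = 0) (x y : E) :
    ⟪Q x x, y⟫_ℝ = 0 := by
  have hplus := cubicForm_add_smul htri x y 1
  have hminus := cubicForm_add_smul htri x y (-1)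
  simp only [h] at hplus hminus
  linarith

theorem eq_zero_of_cubicForm_eq_zero (hsym : ∀ x y, Q x y = Q y x)
    (htri : ∀ x y z, ⟪Q x y, z⟫_ℝ = ⟪Q y z, x⟫_ℝ) (h : ∀ x, cubicForm Q x = 0) : Q = 0 := by
  have hdiag (x : E) : Q x x = 0 :=
    inner_self_eq_zero.mp (inner_apply_self_eq_zero_of_cubicForm_eq_zero htri h x _)
  ext x y
  have := hdiag (x + y)
  simp only [map_add, LinearMap.add_apply, hdiag, hsym y x, zero_add, add_zero] at this
  simpa [← two_smul ℝ] using this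

theorem exists_cubicForm_pos (hsym : ∀ x y, Q x y = Q y x)
    (htri : ∀ x y z, ⟪Q x y, z⟫_ℝ = ⟪Q y z, x⟫_ℝ) (hQ : Q ≠ 0) : ∃ x, 0 < cubicForm Q x := by
  by_contra! hle
  refine hQ (eq_zero_of_cubicForm_eq_zero hsym htri fun x ↦ le_antisymm (hle x) ?_)
  simpa [cubicForm_neg] using hle (-x)

theorem continuous_cubicForm [FiniteDimensional ℝ E] : Continuous (cubicForm Q) :=
  (Q.toContinuousBilinearMap.continuous₂.comp (continuous_id.prodMk continuous_id)).inner
    continuous_id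

theorem exists_forall_cubicForm_le [FiniteDimensional ℝ E] [Nontrivial E] :
    ∃ u : E, ‖u‖ = 1 ∧ ∀ x, cubicForm Q x ≤ cubicForm Q u * ‖x‖ ^ 3 := by
  obtain ⟨u, hu, hmax⟩ := (isCompact_sphere (0 : E) 1).exists_isMaxOn
    (NormedSpace.sphere_nonempty.mpr zero_le_one) (continuous_cubicForm (Q := Q)).continuousOn
  refine ⟨u, by simpa using hu, fun x ↦ ?_⟩
  rcases eq_or_ne x 0 with rfl | hx
  · simp [cubicForm]
  have hnorm : 0 < ‖x‖ := norm_pos_iff.mpr hx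
  have hxu : cubicForm Q (‖x‖⁻¹ • x) ≤ cubicForm Q u := hmax (by simp [norm_smul, hnorm.ne'])
  rw [cubicForm_smul] at hxu
  calc cubicForm Q x = ‖x‖ ^ 3 * ((‖x‖⁻¹) ^ 3 * cubicForm Q x) := by field_simp
    _ ≤ ‖x‖ ^ 3 * cubicForm Q u := by gcongr
    _ = cubicForm Q u * ‖x‖ ^ 3 := mul_comm _ _

theorem hasDerivAt_cubicForm_add_smul (htri : ∀ x y z, ⟪Q x y, z⟫_ℝ = ⟪Q y z, x⟫_ℝ) (x y : E) :
    HasDerivAt (fun t : ℝ ↦ cubicForm Q (x + t • y)) (3 * ⟪Q x x, y⟫_ℝ) 0 := by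
  simp only [cubicForm_add_smul htri]
  have := ((((hasDerivAt_id (0 : ℝ)).const_mul (3 * ⟪Q x x, y⟫_ℝ)).const_add (cubicForm Q x)).add
    (((hasDerivAt_pow 2 (0 : ℝ)).const_mul (3 * ⟪Q y y, x⟫_ℝ)))).add
    ((hasDerivAt_pow 3 (0 : ℝ)).mul_const (cubicForm Q y))
  refine (this.congr_deriv (by norm_num)).congr_of_eventuallyEq (.of_forall fun t ↦ ?_)
  simp only [Pi.add_apply, id]
  ring

theorem apply_self_eq_smul_of_forall_cubicForm_le (htri : ∀ x y z, ⟪Q x y, z⟫_ℝ = ⟪Q y z, x⟫_ℝ)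
    {u : E} (hu : ‖u‖ = 1) (hpos : 0 ≤ cubicForm Q u)
    (hmax : ∀ x, cubicForm Q x ≤ cubicForm Q u * ‖x‖ ^ 3) :
    Q u u = cubicForm Q u • u := by
  set M := cubicForm Q u
  -- `s³ ≤ (s² + s⁴) / 2` with equality at `s = 1`: `u` maximizes `g`, which is polynomial on lines
  let g : E → ℝ := fun x ↦ cubicForm Q x - M / 2 * (‖x‖ ^ 2 + (‖x‖ ^ 2) ^ 2)
  have hg : ∀ x, g x ≤ g u := fun x ↦ by
    have hcube : ‖x‖ ^ 3 ≤ (‖x‖ ^ 2 + (‖x‖ ^ 2) ^ 2) / 2 := by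
      nlinarith [norm_nonneg x, sq_nonneg (‖x‖ - 1)]
    simp only [g, hu]
    nlinarith [hmax x, mul_le_mul_of_nonneg_left hcube hpos]
  refine ext_inner_right ℝ fun h ↦ ?_
  have hline : HasDerivAt (fun t : ℝ ↦ g (u + t • h)) (3 * ⟪Q u u, h⟫_ℝ - 3 * M * ⟪u, h⟫_ℝ) 0 := by
    have hcurve : HasDerivAt (fun t : ℝ ↦ u + t • h) h 0 := by
      simpa using ((hasDerivAt_id (0 : ℝ)).smul_const h).const_add u
    have hsq := hcurve.norm_sq
    refine ((hasDerivAt_cubicForm_add_smul htri u h).sub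
      ((hsq.add (hsq.pow 2)).const_mul (M / 2))).congr_deriv ?_
    simp only [zero_smul, add_zero, hu]
    ring
  have hcrit := (IsMaxOn.isLocalMax (f := fun t : ℝ ↦ g (u + t • h)) (s := Set.univ)
    (fun t _ ↦ by simpa using hg (u + t • h)) Filter.univ_mem).hasDerivAt_eq_zero hline
  rw [inner_smul_left, RCLike.conj_to_real]
  linarith

end CubicForm

theorem LinearMap.apply_inv_smul_self_of_apply_self_eq_smul {K M : Type*} [Field K]
    [AddCommGroup M] [Module K M] {Q : M →ₗ[K] M →ₗ[K] M} {u : M} {c : K} (hc : c ≠ 0)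
    (hu : Q u u = c • u) : Q (c⁻¹ • u) (c⁻¹ • u) = c⁻¹ • u := by
  rw [map_smul, map_smul, LinearMap.smul_apply, hu, smul_smul, smul_smul]
  congr 1
  field_simp

/-- If `Q : ℝᵈ × ℝᵈ → ℝᵈ` is a nonzero symmetric bilinear map whose associated
cubic form `⟨Q(x,y),z⟩` is fully symmetric, then there exists `z ≠ 0` with
`Q(z,z) = z`. -/
theorem stmt7 {d : ℕ}
    (Q : EuclideanSpace ℝ (Fin d) →ₗ[ℝ] EuclideanSpace ℝ (Fin d) →ₗ[ℝ]
      EuclideanSpace ℝ (Fin d))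
    (hQ : Q ≠ 0)
    (hsym : ∀ x y, Q x y = Q y x)
    (htri : ∀ x y z, ⟪Q x y, z⟫_ℝ = ⟪Q y z, x⟫_ℝ) :
    ∃ z : EuclideanSpace ℝ (Fin d), z ≠ 0 ∧ Q z z = z := by
  obtain ⟨x, hx⟩ := exists_cubicForm_pos hsym htri hQ
  have : Nontrivial (EuclideanSpace ℝ (Fin d)) :=
    nontrivial_of_ne x 0 fun h ↦ by simp [h, cubicForm] at hx
  obtain ⟨u, hu, hmax⟩ := exists_forall_cubicForm_le (Q := Q)
  have hM : 0 < cubicForm Q u := pos_of_mul_pos_left (hx.trans_le (hmax x)) (by positivity)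
  have hu0 : u ≠ 0 := by rintro rfl; simp at hu
  refine ⟨(cubicForm Q u)⁻¹ • u, smul_ne_zero (inv_ne_zero hM.ne') hu0, ?_⟩
  exact LinearMap.apply_inv_smul_self_of_apply_self_eq_smul hM.ne'
    (apply_self_eq_smul_of_forall_cubicForm_le htri hu hM.le hmax)
end

section
/- Let Q : ℝᵈ × ℝᵈ → ℝᵈ be a symmetric bilinear map satisfying the compatibility condition Q(X, Q(Y,Z)) = Q(Y, Q(X,Z)) for all X, Y, Z ∈ ℝᵈ. If v : ℝ × ℝ → ℝᵈ is smooth and solves the modified KdV system ∂ₜv - ∂ₓₓₓv + (2/3)Q(v, Q(v, ∂ₓv)) = 0, then the Miura transform u = ∂ₓv + (1/3)Q(v,v) solves the vector KdV system ∂ₜu - ∂ₓₓₓu + ∂ₓQ(u,u) = 0. -/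
/-- Partial derivative in the first (time) variable. -/
noncomputable def pt {E : Type*} [NormedAddCommGroup E] [NormedSpace ℝ E]
    (u : ℝ × ℝ → E) : ℝ × ℝ → E := fun p => deriv (fun s => u (s, p.2)) p.1

/-- Partial derivative in the second (space) variable. -/
noncomputable def px {E : Type*} [NormedAddCommGroup E] [NormedSpace ℝ E]
    (u : ℝ × ℝ → E) : ℝ × ℝ → E := fun p => deriv (fun y => u (p.1, y)) p.2

section aux
variable {E F : Type*} [NormedAddCommGroup E] [NormedSpace ℝ E]
  [NormedAddCommGroup F] [NormedSpace ℝ F]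

lemma hasDerivAt_sliceX {f : ℝ × ℝ → E} (hf : Differentiable ℝ f) (p : ℝ × ℝ) :
    HasDerivAt (fun y => f (p.1, y)) (px f p) p.2 := by
  have h1 : HasDerivAt (fun y : ℝ => ((p.1, y) : ℝ × ℝ)) ((0 : ℝ), (1 : ℝ)) p.2 :=
    (hasDerivAt_const _ _).prodMk (hasDerivAt_id _)
  have h2 : HasDerivAt (fun y => f (p.1, y)) (fderiv ℝ f p ((0:ℝ),(1:ℝ))) p.2 := by
    have := (hf p).hasFDerivAt.comp_hasDerivAt p.2 h1
    simpa [Function.comp_def] using this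
  simpa [px, h2.deriv] using h2

lemma hasDerivAt_sliceT {f : ℝ × ℝ → E} (hf : Differentiable ℝ f) (p : ℝ × ℝ) :
    HasDerivAt (fun s => f (s, p.2)) (pt f p) p.1 := by
  have h1 : HasDerivAt (fun s : ℝ => ((s, p.2) : ℝ × ℝ)) ((1 : ℝ), (0 : ℝ)) p.1 :=
    (hasDerivAt_id _).prodMk (hasDerivAt_const _ _)
  have h2 : HasDerivAt (fun s => f (s, p.2)) (fderiv ℝ f p ((1:ℝ),(0:ℝ))) p.1 := by
    have := (hf p).hasFDerivAt.comp_hasDerivAt p.1 h1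
    simpa [Function.comp_def] using this
  simpa [pt, h2.deriv] using h2

lemma px_eq_fderiv {f : ℝ × ℝ → E} (hf : Differentiable ℝ f) (p : ℝ × ℝ) :
    px f p = fderiv ℝ f p ((0:ℝ),(1:ℝ)) := by
  have h1 : HasDerivAt (fun y : ℝ => ((p.1, y) : ℝ × ℝ)) ((0 : ℝ), (1 : ℝ)) p.2 :=
    (hasDerivAt_const _ _).prodMk (hasDerivAt_id _)
  have h2 : HasDerivAt (fun y => f (p.1, y)) (fderiv ℝ f p ((0:ℝ),(1:ℝ))) p.2 := by
    have := (hf p).hasFDerivAt.comp_hasDerivAt p.2 h1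
    simpa [Function.comp_def] using this
  simpa [px] using h2.deriv

lemma pt_eq_fderiv {f : ℝ × ℝ → E} (hf : Differentiable ℝ f) (p : ℝ × ℝ) :
    pt f p = fderiv ℝ f p ((1:ℝ),(0:ℝ)) := by
  have h1 : HasDerivAt (fun s : ℝ => ((s, p.2) : ℝ × ℝ)) ((1 : ℝ), (0 : ℝ)) p.1 :=
    (hasDerivAt_id _).prodMk (hasDerivAt_const _ _)
  have h2 : HasDerivAt (fun s => f (s, p.2)) (fderiv ℝ f p ((1:ℝ),(0:ℝ))) p.1 := by
    have := (hf p).hasFDerivAt.comp_hasDerivAt p.1 h1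
    simpa [Function.comp_def] using this
  simpa [pt] using h2.deriv

lemma contDiff_px {f : ℝ × ℝ → E} (hf : ContDiff ℝ (⊤ : ℕ∞) f) : ContDiff ℝ (⊤ : ℕ∞) (px f) := by
  have h : px f = fun p => (ContinuousLinearMap.apply ℝ E (((0:ℝ),(1:ℝ)) : ℝ × ℝ))
      (fderiv ℝ f p) := funext fun p => px_eq_fderiv (hf.differentiable (by simp)) p
  rw [h]
  exact (ContinuousLinearMap.apply ℝ E _).contDiff.comp (hf.fderiv_right (m := (⊤ : ℕ∞)) (by simp))

lemma px_addF {f g : ℝ × ℝ → E} (hf : Differentiable ℝ f) (hg : Differentiable ℝ g) :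
    px (fun q => f q + g q) = fun q => px f q + px g q :=
  funext fun p => ((hasDerivAt_sliceX hf p).add (hasDerivAt_sliceX hg p)).deriv

lemma pt_addF {f g : ℝ × ℝ → E} (hf : Differentiable ℝ f) (hg : Differentiable ℝ g) :
    pt (fun q => f q + g q) = fun q => pt f q + pt g q :=
  funext fun p => ((hasDerivAt_sliceT hf p).add (hasDerivAt_sliceT hg p)).deriv

lemma px_smulF (c : ℝ) {f : ℝ × ℝ → E} (hf : Differentiable ℝ f) :
    px (fun q => c • f q) = fun q => c • px f q :=
  funext fun p => ((hasDerivAt_sliceX hf p).const_smul c).deriv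

lemma pt_smulF (c : ℝ) {f : ℝ × ℝ → E} (hf : Differentiable ℝ f) :
    pt (fun q => c • f q) = fun q => c • pt f q :=
  funext fun p => ((hasDerivAt_sliceT hf p).const_smul c).deriv

lemma px_bilinF (B : E →L[ℝ] E →L[ℝ] F) {f g : ℝ × ℝ → E}
    (hf : Differentiable ℝ f) (hg : Differentiable ℝ g) :
    px (fun q => B (f q) (g q)) = fun q => B (px f q) (g q) + B (f q) (px g q) := by
  funext p
  have hc : HasDerivAt (fun y => B (f (p.1, y))) (B (px f p)) p.2 :=
    B.hasFDerivAt.comp_hasDerivAt p.2 (hasDerivAt_sliceX hf p)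
  exact (hc.clm_apply (hasDerivAt_sliceX hg p)).deriv

lemma pt_bilinF (B : E →L[ℝ] E →L[ℝ] F) {f g : ℝ × ℝ → E}
    (hf : Differentiable ℝ f) (hg : Differentiable ℝ g) :
    pt (fun q => B (f q) (g q)) = fun q => B (pt f q) (g q) + B (f q) (pt g q) := by
  funext p
  have hc : HasDerivAt (fun s => B (f (s, p.2))) (B (pt f p)) p.1 :=
    B.hasFDerivAt.comp_hasDerivAt p.1 (hasDerivAt_sliceT hf p)
  exact (hc.clm_apply (hasDerivAt_sliceT hg p)).deriv

lemma contDiff_bilin (B : E →L[ℝ] E →L[ℝ] F) {f g : ℝ × ℝ → E}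
    (hf : ContDiff ℝ (⊤ : ℕ∞) f) (hg : ContDiff ℝ (⊤ : ℕ∞) g) :
    ContDiff ℝ (⊤ : ℕ∞) (fun q => B (f q) (g q)) :=
  B.isBoundedBilinearMap.contDiff.comp (hf.prodMk hg)

lemma pt_px_comm {f : ℝ × ℝ → E} (hf : ContDiff ℝ (⊤ : ℕ∞) f) : pt (px f) = px (pt f) := by
  funext p
  have hd : Differentiable ℝ f := hf.differentiable (by simp)
  have hd1 : ContDiff ℝ (⊤ : ℕ∞) (fderiv ℝ f) := hf.fderiv_right (by simp)
  have hsym := second_derivative_symmetric (f := f) (f' := fderiv ℝ f)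
    (f'' := fderiv ℝ (fderiv ℝ f) p)
    (fun y => (hd y).hasFDerivAt) ((hd1.differentiable (by simp) p).hasFDerivAt)
  have hpx : px f = fun q => (ContinuousLinearMap.apply ℝ E (((0:ℝ),(1:ℝ)) : ℝ × ℝ))
      (fderiv ℝ f q) := funext fun q => px_eq_fderiv hd q
  have hpt : pt f = fun q => (ContinuousLinearMap.apply ℝ E (((1:ℝ),(0:ℝ)) : ℝ × ℝ))
      (fderiv ℝ f q) := funext fun q => pt_eq_fderiv hd q
  have h1 : pt (px f) p = fderiv ℝ (fderiv ℝ f) p ((1:ℝ),(0:ℝ)) ((0:ℝ),(1:ℝ)) := by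
    rw [pt_eq_fderiv (by rw [hpx]; exact ((ContinuousLinearMap.apply ℝ E _).contDiff.comp hd1).differentiable (by simp)) p, hpx]
    rw [fderiv_comp' p ((ContinuousLinearMap.apply ℝ E _).differentiableAt)
      (hd1.differentiable (by simp) p)]
    simp
  have h2 : px (pt f) p = fderiv ℝ (fderiv ℝ f) p ((0:ℝ),(1:ℝ)) ((1:ℝ),(0:ℝ)) := by
    rw [px_eq_fderiv (by rw [hpt]; exact ((ContinuousLinearMap.apply ℝ E _).contDiff.comp hd1).differentiable (by simp)) p, hpt]
    rw [fderiv_comp' p ((ContinuousLinearMap.apply ℝ E _).differentiableAt)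
      (hd1.differentiable (by simp) p)]
    simp
  rw [h1, h2, hsym]

lemma px_subF {f g : ℝ × ℝ → E} (hf : Differentiable ℝ f) (hg : Differentiable ℝ g) :
    px (fun q => f q - g q) = fun q => px f q - px g q :=
  funext fun p => ((hasDerivAt_sliceX hf p).sub (hasDerivAt_sliceX hg p)).deriv

end aux

/-- Miura transform: if `Q(X,Q(Y,Z)) = Q(Y,Q(X,Z))` and `v` is a smooth solution
of the modified KdV system `∂ₜv - ∂ₓₓₓv + (2/3)Q(v,Q(v,∂ₓv)) = 0`, then
`u = ∂ₓv + (1/3)Q(v,v)` solves the vector KdV system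
`∂ₜu - ∂ₓₓₓu + ∂ₓQ(u,u) = 0`. -/
theorem stmt13 {d : ℕ}
    (Q : EuclideanSpace ℝ (Fin d) →ₗ[ℝ] EuclideanSpace ℝ (Fin d) →ₗ[ℝ]
      EuclideanSpace ℝ (Fin d))
    (hsym : ∀ x y, Q x y = Q y x)
    (hcompat : ∀ X Y Z, Q X (Q Y Z) = Q Y (Q X Z))
    (v : ℝ × ℝ → EuclideanSpace ℝ (Fin d)) (hv : ContDiff ℝ (⊤ : ℕ∞) v)
    (hmkdv : ∀ p : ℝ × ℝ,
      pt v p - px (px (px v)) p + (2 / 3 : ℝ) • Q (v p) (Q (v p) (px v p)) = 0) :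
    ∀ p : ℝ × ℝ,
      pt (fun q => px v q + (1 / 3 : ℝ) • Q (v q) (v q)) p -
          px (px (px (fun q => px v q + (1 / 3 : ℝ) • Q (v q) (v q)))) p +
          px (fun q =>
            Q (px v q + (1 / 3 : ℝ) • Q (v q) (v q))
              (px v q + (1 / 3 : ℝ) • Q (v q) (v q))) p = 0 := by
  intro p
  let E := EuclideanSpace ℝ (Fin d)
  let B : E →L[ℝ] E →L[ℝ] E :=
    LinearMap.toContinuousLinearMap
      ((LinearMap.toContinuousLinearMap.toLinearMap : (E →ₗ[ℝ] E) →ₗ[ℝ] (E →L[ℝ] E)) ∘ₗ Q)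
  have hB : ∀ x y, Q x y = B x y := fun _ _ => rfl
  have hBsym : ∀ x y, B x y = B y x := fun x y => by rw [← hB, ← hB]; exact hsym x y
  have hBcompat : ∀ X Y Z, B X (B Y Z) = B Y (B X Z) := fun X Y Z => by
    simp only [← hB]; exact hcompat X Y Z
  simp only [hB] at hmkdv ⊢
  -- smoothness bookkeeping
  have hvD : Differentiable ℝ v := hv.differentiable (by simp)
  have h1 : ContDiff ℝ (⊤ : ℕ∞) (px v) := contDiff_px hv
  have h2 : ContDiff ℝ (⊤ : ℕ∞) (px (px v)) := contDiff_px h1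
  have h3 : ContDiff ℝ (⊤ : ℕ∞) (px (px (px v))) := contDiff_px h2
  have h1D : Differentiable ℝ (px v) := h1.differentiable (by simp)
  have h2D : Differentiable ℝ (px (px v)) := h2.differentiable (by simp)
  have h3D : Differentiable ℝ (px (px (px v))) := h3.differentiable (by simp)
  have hg0 : Differentiable ℝ (fun q => B (v q) (v q)) :=
    (contDiff_bilin B hv hv).differentiable (by simp)
  have hs0 : Differentiable ℝ (fun q => (1 / 3 : ℝ) • B (v q) (v q)) :=
    hg0.fun_const_smul _
  have hu : Differentiable ℝ (fun q => px v q + (1 / 3 : ℝ) • B (v q) (v q)) :=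
    h1D.add hs0
  have hg1a : Differentiable ℝ (fun q => B (px v q) (v q)) :=
    (contDiff_bilin B h1 hv).differentiable (by simp)
  have hg1b : Differentiable ℝ (fun q => B (v q) (px v q)) :=
    (contDiff_bilin B hv h1).differentiable (by simp)
  have hs1 : Differentiable ℝ
      (fun q => (1 / 3 : ℝ) • (B (px v q) (v q) + B (v q) (px v q))) :=
    (hg1a.add hg1b).fun_const_smul _
  have hg2a : Differentiable ℝ (fun q => B (px (px v) q) (v q)) :=
    (contDiff_bilin B h2 hv).differentiable (by simp)
  have hg2b : Differentiable ℝ (fun q => B (px v q) (px v q)) :=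
    (contDiff_bilin B h1 h1).differentiable (by simp)
  have hg2c : Differentiable ℝ (fun q => B (v q) (px (px v) q)) :=
    (contDiff_bilin B hv h2).differentiable (by simp)
  have hs2 : Differentiable ℝ
      (fun q => (1 / 3 : ℝ) • ((B (px (px v) q) (v q) + B (px v q) (px v q)) +
        (B (px v q) (px v q) + B (v q) (px (px v) q)))) :=
    ((hg2a.add hg2b).add (hg2b.add hg2c)).fun_const_smul _
  have hW : Differentiable ℝ (fun q => B (v q) (B (v q) (px v q))) :=
    (contDiff_bilin B hv (contDiff_bilin B hv h1)).differentiable (by simp)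
  have hsW : Differentiable ℝ (fun q => (2 / 3 : ℝ) • B (v q) (B (v q) (px v q))) :=
    hW.fun_const_smul _
  -- the mKdV equation, solved for pt v
  have T3 : pt v = fun q => px (px (px v)) q -
      (2 / 3 : ℝ) • B (v q) (B (v q) (px v q)) := by
    funext q
    have h := hmkdv q
    linear_combination (norm := module) h
  -- expand all derivatives
  simp only [px_addF h1D hs0, pt_addF h1D hs0,
    px_smulF (1/3 : ℝ) hg0, pt_smulF (1/3 : ℝ) hg0,
    px_smulF (1/3 : ℝ) (hg1a.fun_add hg1b),
    px_smulF (1/3 : ℝ) ((hg2a.fun_add hg2b).fun_add (hg2b.fun_add hg2c)),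
    px_smulF (2/3 : ℝ) hW,
    px_bilinF B hvD hvD, pt_bilinF B hvD hvD,
    pt_px_comm hv, T3,
    px_subF h3D hsW,
    px_bilinF B hvD hg1b,
    px_addF h2D hs1,
    px_bilinF B h1D hvD, px_bilinF B hvD h1D,
    px_addF h3D hs2,
    px_bilinF B h2D hvD, px_bilinF B h1D h1D, px_bilinF B hvD h2D,
    px_bilinF B hu hu,
    px_addF hg1a hg1b, px_addF (hg2a.fun_add hg2b) (hg2b.fun_add hg2c),
    px_addF hg2a hg2b, px_addF hg2b hg2c]
  generalize px (px (px (px v))) p = f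
  generalize px (px (px v)) p = e
  generalize px (px v) p = c
  generalize px v p = b
  generalize v p = a
  simp only [map_add, map_sub, map_smul, ContinuousLinearMap.add_apply,
    ContinuousLinearMap.sub_apply, ContinuousLinearMap.smul_apply]
  have h01 : B b a = B a b := hBsym b a
  have h02 : B e a = B a e := hBsym e a
  have h03 : B c b = B b c := hBsym c b
  have h05 : B (B a b) b = B b (B a b) := hBsym _ _
  have h06 : B (B a a) c = B a (B a c) := by
    rw [hBsym (B a a) c, hBcompat c a a, hBsym c a]
  have h07 : B (B a a) (B a b) = B a (B a (B a b)) := by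
    rw [hBsym (B a a) (B a b), hBcompat (B a b) a a, hBsym (B a b) a]
  have h08 : B (B a b) (B a a) = B a (B a (B a b)) := by
    rw [hBsym (B a b) (B a a)]; exact h07
  have h09 : B (B a (B a b)) a = B a (B a (B a b)) := hBsym _ _
  have h10 : B a (B b b) = B b (B a b) := hBcompat a b b
  have h12 : B c (B a a) = B a (B a c) := by rw [hBcompat c a a, hBsym c a]
  simp only [h01, h02, h03, h05, h06, h07, h08, h09, h10, h12]
  module
end

section
/- Let a > 0, T > 0, let g₀ : ℝ → ℝ be nonnegative and integrable, and let F : [0,T] × ℝ → ℝ be nonnegative, measurable, and integrable in x for each s with s ↦ ∫_ℝ F(s,y)dy integrable on [0,T]. Define g(t,x) = g₀(x + a·t) + ∫₀ᵗ F(s, x + a·(t-s)) ds. Then for every x ∈ ℝ, ∫₀ᵀ g(t,x) dt ≤ (1/a)·∫_ℝ g₀(y) dy + (1/a)·∫₀ᵀ ∫_ℝ F(s,y) dy ds. -/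
/-!
At a fixed point `x`, integrating in time sweeps the characteristic variable `y = x + a t`
at speed `a`, so `∫ g₀(x + a t) dt ≤ (1/a) ∫ g₀`. For the Duhamel term, enlarge the range
`0 < s ≤ t` to `(0, T]²` (the integrand is nonnegative), swap the integrals by Tonelli, and
apply the same substitution `y = x + a (t - s)` for each fixed source time `s`. Everything is done
in `ℝ≥0∞`, where no integrability is needed, and transferred back to `ℝ` at the end.
-/

open MeasureTheory Set ENNReal

theorem ofReal_integral_le_lintegral_ofReal {α : Type*} [MeasurableSpace α]
    {μ : Measure α} (f : α → ℝ) : ENNReal.ofReal (∫ a, f a ∂μ) ≤ ∫⁻ a, ENNReal.ofReal (f a) ∂μ := by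
  by_cases hf : Integrable f μ
  · rw [integral_eq_lintegral_pos_part_sub_lintegral_neg_part hf]
    calc ENNReal.ofReal (_ - _)
        ≤ ENNReal.ofReal (∫⁻ a, ENNReal.ofReal (f a) ∂μ).toReal :=
          ENNReal.ofReal_le_ofReal (sub_le_self _ toReal_nonneg)
      _ ≤ _ := ofReal_toReal_le
  · simp [integral_undef hf]

theorem lintegral_comp_add_mul {a : ℝ} (ha : a ≠ 0) (c : ℝ) (φ : ℝ → ℝ≥0∞) :
    ∫⁻ t, φ (c + a * t) = ENNReal.ofReal |a⁻¹| * ∫⁻ y, φ y := by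
  rw [← (measurableEmbedding_mulLeft₀ ha).lintegral_map (fun y => φ (c + y)),
    Real.map_volume_mul_left ha, lintegral_smul_measure, lintegral_add_left_eq_self,
    smul_eq_mul]

theorem setLIntegral_duhamel_le {a : ℝ} (ha : a ≠ 0) (x t₀ T : ℝ) {f : ℝ × ℝ → ℝ≥0∞}
    (hf : Measurable f) :
    ∫⁻ t in Ioc t₀ T, ∫⁻ s in Ioc t₀ t, f (s, x + a * (t - s)) ≤
      ENNReal.ofReal |a⁻¹| * ∫⁻ s in Ioc t₀ T, ∫⁻ y, f (s, y) := by
  have hmeas : Measurable fun p : ℝ × ℝ => f (p.2, x + a * (p.1 - p.2)) := by fun_prop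
  calc ∫⁻ t in Ioc t₀ T, ∫⁻ s in Ioc t₀ t, f (s, x + a * (t - s))
      ≤ ∫⁻ t in Ioc t₀ T, ∫⁻ s in Ioc t₀ T, f (s, x + a * (t - s)) :=
        setLIntegral_mono' measurableSet_Ioc fun t ht =>
          lintegral_mono_set (Ioc_subset_Ioc_right ht.2)
    _ = ∫⁻ s in Ioc t₀ T, ∫⁻ t in Ioc t₀ T, f (s, x + a * (t - s)) :=
        lintegral_lintegral_swap hmeas.aemeasurable
    _ ≤ ∫⁻ s in Ioc t₀ T, ∫⁻ t, f (s, (x - a * s) + a * t) := by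
        refine lintegral_mono fun s => (setLIntegral_le_lintegral _ _).trans_eq ?_
        congr 1; ext t; congr 2; ring
    _ = ∫⁻ s in Ioc t₀ T, ENNReal.ofReal |a⁻¹| * ∫⁻ y, f (s, y) :=
        lintegral_congr fun s => lintegral_comp_add_mul ha _ fun y => f (s, y)
    _ = ENNReal.ofReal |a⁻¹| * ∫⁻ s in Ioc t₀ T, ∫⁻ y, f (s, y) :=
        lintegral_const_mul' _ _ ofReal_ne_top

theorem setLIntegral_transport_le {a : ℝ} (ha : a ≠ 0) (x t₀ T : ℝ) {g₀ : ℝ → ℝ≥0∞}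
    (hg₀ : AEMeasurable g₀) {f : ℝ × ℝ → ℝ≥0∞} (hf : Measurable f) :
    ∫⁻ t in Ioc t₀ T, (g₀ (x + a * t) + ∫⁻ s in Ioc t₀ t, f (s, x + a * (t - s))) ≤
      ENNReal.ofReal |a⁻¹| * ((∫⁻ y, g₀ y) + ∫⁻ s in Ioc t₀ T, ∫⁻ y, f (s, y)) := by
  have hg₀_shift : AEMeasurable fun t => g₀ (x + a * t) :=
    hg₀.comp_quasiMeasurePreserving <|
      (measurePreserving_add_left volume x).quasiMeasurePreserving.comp
        (Measure.quasiMeasurePreserving_smul volume ha)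
  rw [lintegral_add_left' hg₀_shift.restrict, mul_add]
  exact add_le_add
    ((setLIntegral_le_lintegral _ _).trans_eq (lintegral_comp_add_mul ha x g₀))
    (setLIntegral_duhamel_le ha x t₀ T hf)

/-- Transport estimate: for `g(t,x) = g₀(x + at) + ∫₀ᵗ F(s, x + a(t-s)) ds`
with `a > 0` and nonnegative data, for every `x`,
`∫₀ᵀ g(t,x) dt ≤ (1/a)∫ g₀ + (1/a)∫₀ᵀ ∫ F(s,y) dy ds`. -/
theorem stmt15 (a T : ℝ) (ha : 0 < a) (hT : 0 < T)
    (g₀ : ℝ → ℝ) (hg₀pos : ∀ y, 0 ≤ g₀ y) (hg₀int : Integrable g₀)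
    (F : ℝ × ℝ → ℝ) (hFpos : ∀ s y : ℝ, 0 ≤ F (s, y)) (hFmeas : Measurable F)
    (hFint : ∀ s : ℝ, Integrable fun y => F (s, y))
    (hFint2 : IntegrableOn (fun s => ∫ y, F (s, y)) (Set.Icc 0 T)) :
    ∀ x : ℝ,
      (∫ t in (0 : ℝ)..T,
          (g₀ (x + a * t) + ∫ s in (0 : ℝ)..t, F (s, x + a * (t - s)))) ≤
        (1 / a) * (∫ y, g₀ y) + (1 / a) * ∫ s in (0 : ℝ)..T, ∫ y, F (s, y) := by
  intro x
  have hg₀_nonneg : 0 ≤ ∫ y, g₀ y := integral_nonneg hg₀pos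
  have hF_nonneg : 0 ≤ ∫ s in (0 : ℝ)..T, ∫ y, F (s, y) :=
    intervalIntegral.integral_nonneg hT.le fun s _ => integral_nonneg (hFpos s)
  have hg₀_eq : ∫⁻ y, ENNReal.ofReal (g₀ y) = ENNReal.ofReal (∫ y, g₀ y) :=
    (ofReal_integral_eq_lintegral_ofReal hg₀int (ae_of_all _ hg₀pos)).symm
  have hF_eq : ∫⁻ s in Ioc 0 T, ∫⁻ y, ENNReal.ofReal (F (s, y)) =
      ENNReal.ofReal (∫ s in (0 : ℝ)..T, ∫ y, F (s, y)) := by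
    rw [intervalIntegral.integral_of_le hT.le, ofReal_integral_eq_lintegral_ofReal
      (hFint2.mono_set Ioc_subset_Icc_self) (ae_of_all _ fun s => integral_nonneg (hFpos s))]
    exact lintegral_congr fun s =>
      (ofReal_integral_eq_lintegral_ofReal (hFint s) (ae_of_all _ (hFpos s))).symm
  rw [← ENNReal.ofReal_le_ofReal_iff (by positivity), intervalIntegral.integral_of_le hT.le]
  calc _ ≤ ∫⁻ t in Ioc 0 T, ENNReal.ofReal
          (g₀ (x + a * t) + ∫ s in (0 : ℝ)..t, F (s, x + a * (t - s))) :=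
        ofReal_integral_le_lintegral_ofReal _
    _ ≤ ∫⁻ t in Ioc 0 T, (ENNReal.ofReal (g₀ (x + a * t)) +
          ∫⁻ s in Ioc 0 t, ENNReal.ofReal (F (s, x + a * (t - s)))) := by
        refine setLIntegral_mono' measurableSet_Ioc fun t ht => ?_
        rw [intervalIntegral.integral_of_le ht.1.le]
        exact ofReal_add_le.trans (add_le_add le_rfl (ofReal_integral_le_lintegral_ofReal _))
    _ ≤ ENNReal.ofReal |a⁻¹| * ((∫⁻ y, ENNReal.ofReal (g₀ y)) +
          ∫⁻ s in Ioc 0 T, ∫⁻ y, ENNReal.ofReal (F (s, y))) :=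
        setLIntegral_transport_le ha.ne' x 0 T hg₀int.aemeasurable.ennreal_ofReal
          hFmeas.ennreal_ofReal
    _ = _ := by
        rw [hg₀_eq, hF_eq, abs_of_pos (inv_pos.2 ha), ← ofReal_add hg₀_nonneg hF_nonneg,
          ← ofReal_mul (inv_nonneg.2 ha.le), one_div, mul_add]
end
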